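/- Let n ≥ 1, m ≥ 1. Let L_prin : ℝⁿ × ℝⁿ → M_m(ℂ) be smooth with Hermitian values, let L_sub : ℝⁿ → M_m(ℂ) be smooth with Hermitian values, let h : ℝⁿ × (ℝⁿ \ {0}) → ℝ be smooth, and let v : ℝⁿ × (ℝⁿ \ {0}) → ℂᵐ be smooth with L_prin(x,p)·v(x,p) = h(x,p)·v(x,p) and v(x,p)*·v(x,p) = 1 for all (x,p), p ≠ 0. Then the function f := v*·L_sub·v − (i/2){v*, L_prin − h·I, v} − i·v*·{v, h} is real-valued on ℝⁿ × (ℝⁿ \ {0}). -/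

import Mathlib

open Matrix Complex Topology

noncomputable section

/-- Partial derivative `∂f/∂x^α` of a scalar function on phase space `ℝⁿ_x × ℝⁿ_p`. -/
def Dx {n : ℕ} (α : Fin n) (f : (Fin n → ℝ) × (Fin n → ℝ) → ℂ)
    (z : (Fin n → ℝ) × (Fin n → ℝ)) : ℂ :=
  fderiv ℝ f z (Pi.single α 1, 0)

/-- Partial derivative `∂f/∂p_α` of a scalar function on phase space `ℝⁿ_x × ℝⁿ_p`. -/
def Dp {n : ℕ} (α : Fin n) (f : (Fin n → ℝ) × (Fin n → ℝ) → ℂ)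
    (z : (Fin n → ℝ) × (Fin n → ℝ)) : ℂ :=
  fderiv ℝ f z (0, Pi.single α 1)

/-- The phase function
`f = v*·L_sub·v - (i/2){v*, L_prin - h·I, v} - i·v*·{v, h}`,
where `{F,G,H} = Σ_α F_{x^α} G H_{p_α} - F_{p_α} G H_{x^α}` and
`{F,H} = Σ_α F_{x^α}H_{p_α} - F_{p_α}H_{x^α}`. -/
def phaseFunction {n m : ℕ}
    (Lprin : (Fin n → ℝ) × (Fin n → ℝ) → Matrix (Fin m) (Fin m) ℂ)
    (Lsub : (Fin n → ℝ) → Matrix (Fin m) (Fin m) ℂ)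
    (h : (Fin n → ℝ) × (Fin n → ℝ) → ℝ)
    (v : (Fin n → ℝ) × (Fin n → ℝ) → Fin m → ℂ)
    (z : (Fin n → ℝ) × (Fin n → ℝ)) : ℂ :=
  (∑ k, ∑ l, (starRingEnd ℂ) (v z k) * Lsub z.1 k l * v z l)
  - Complex.I / 2 *
      (∑ α, ∑ k, ∑ l,
        (Dx α (fun w => (starRingEnd ℂ) (v w k)) z
            * (Lprin z k l - if k = l then ((h z : ℝ) : ℂ) else 0)
            * Dp α (fun w => v w l) z
          - Dp α (fun w => (starRingEnd ℂ) (v w k)) z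
            * (Lprin z k l - if k = l then ((h z : ℝ) : ℂ) else 0)
            * Dx α (fun w => v w l) z))
  - Complex.I *
      (∑ k, (starRingEnd ℂ) (v z k) *
        (∑ α,
          (Dx α (fun w => v w k) z * Dp α (fun w => ((h w : ℝ) : ℂ)) z
            - Dp α (fun w => v w k) z * Dx α (fun w => ((h w : ℝ) : ℂ)) z)))


/-- Conjugation commutes with `fderiv` applied to a vector (unconditionally, since
complex conjugation is a continuous `ℝ`-linear equivalence). -/
lemma fderiv_conj_apply {E : Type*} [NormedAddCommGroup E] [NormedSpace ℝ E]
    (f : E → ℂ) (x : E) (e : E) :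
    fderiv ℝ (fun w => (starRingEnd ℂ) (f w)) x e = (starRingEnd ℂ) (fderiv ℝ f x e) := by
  have h : (fun w => (starRingEnd ℂ) (f w)) = (Complex.conjCLE : ℂ ≃L[ℝ] ℂ) ∘ f := rfl
  rw [h, ContinuousLinearEquiv.comp_fderiv]
  rfl

/-- The derivative of the coercion to `ℂ` of a real function is the coercion of the
derivative. -/
lemma fderiv_ofReal_apply {E : Type*} [NormedAddCommGroup E] [NormedSpace ℝ E]
    {f : E → ℝ} {x : E} (hf : DifferentiableAt ℝ f x) (e : E) :
    fderiv ℝ (fun w => ((f w : ℝ) : ℂ)) x e = ((fderiv ℝ f x e : ℝ) : ℂ) := by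
  have h : (fun w => ((f w : ℝ) : ℂ)) = Complex.ofRealCLM ∘ f := rfl
  rw [h, fderiv_comp x Complex.ofRealCLM.differentiableAt hf, ContinuousLinearMap.fderiv]
  rfl

/-- The phase function
`f = v*·L_sub·v - (i/2){v*, L_prin - h·I, v} - i·v*·{v, h}` built from a smooth
normalised eigenvector `v` of the Hermitian principal symbol `L_prin` with eigenvalue
`h`, and a Hermitian subprincipal symbol `L_sub`, is real-valued on
`ℝⁿ × (ℝⁿ \ {0})`. -/
theorem phase_function_is_real_valued
    {n m : ℕ} (hn : 1 ≤ n) (hm : 1 ≤ m)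
    (Lprin : (Fin n → ℝ) × (Fin n → ℝ) → Matrix (Fin m) (Fin m) ℂ)
    (hLpSmooth : ∀ k l, ContDiff ℝ (⊤ : ℕ∞) (fun z => Lprin z k l))
    (hLpHerm : ∀ z, (Lprin z).IsHermitian)
    (Lsub : (Fin n → ℝ) → Matrix (Fin m) (Fin m) ℂ)
    (hLsSmooth : ∀ k l, ContDiff ℝ (⊤ : ℕ∞) (fun x => Lsub x k l))
    (hLsHerm : ∀ x, (Lsub x).IsHermitian)
    (h : (Fin n → ℝ) × (Fin n → ℝ) → ℝ)
    (hhSmooth : ContDiffOn ℝ (⊤ : ℕ∞) h {z : (Fin n → ℝ) × (Fin n → ℝ) | z.2 ≠ 0})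
    (v : (Fin n → ℝ) × (Fin n → ℝ) → Fin m → ℂ)
    (hvSmooth : ∀ k, ContDiffOn ℝ (⊤ : ℕ∞) (fun z => v z k)
      {z : (Fin n → ℝ) × (Fin n → ℝ) | z.2 ≠ 0})
    (heig : ∀ z : (Fin n → ℝ) × (Fin n → ℝ), z.2 ≠ 0 →
      Lprin z *ᵥ v z = ((h z : ℝ) : ℂ) • v z)
    (hnorm : ∀ z : (Fin n → ℝ) × (Fin n → ℝ), z.2 ≠ 0 →
      ∑ k, (starRingEnd ℂ) (v z k) * v z k = 1) :
    ∀ z : (Fin n → ℝ) × (Fin n → ℝ), z.2 ≠ 0 →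
      (phaseFunction Lprin Lsub h v z).im = 0 := by
  intro z hz
  have hU : IsOpen {z : (Fin n → ℝ) × (Fin n → ℝ) | z.2 ≠ 0} :=
    isOpen_ne.preimage continuous_snd
  have hmem : {z : (Fin n → ℝ) × (Fin n → ℝ) | z.2 ≠ 0} ∈ 𝓝 z := hU.mem_nhds hz
  have hdv : ∀ k, DifferentiableAt ℝ (fun w => v w k) z := fun k =>
    (((hvSmooth k).differentiableOn (by simp)).differentiableAt hmem)
  have hdh : DifferentiableAt ℝ h z :=
    (hhSmooth.differentiableOn (by simp)).differentiableAt hmem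
  have hdconj : ∀ k, DifferentiableAt ℝ (fun w => (starRingEnd ℂ) (v w k)) z := fun k =>
    (Complex.conjCLE.differentiableAt).comp z (hdv k)
  -- key: derivative of the normalisation condition
  have key : ∀ e, ∑ k, ((starRingEnd ℂ) (v z k) * fderiv ℝ (fun w => v w k) z e
      + (starRingEnd ℂ) (fderiv ℝ (fun w => v w k) z e) * v z k) = 0 := by
    intro e
    have hgz : fderiv ℝ (fun w => ∑ k, (starRingEnd ℂ) (v w k) * v w k) z = 0 := by
      have hev : (fun w => ∑ k, (starRingEnd ℂ) (v w k) * v w k)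
          =ᶠ[𝓝 z] fun _ => (1 : ℂ) :=
        Filter.eventuallyEq_of_mem hmem fun w hw => hnorm w hw
      rw [hev.fderiv_eq]
      exact fderiv_const_apply 1
    have hsum : fderiv ℝ (fun w => ∑ k, (starRingEnd ℂ) (v w k) * v w k) z =
        ∑ k, fderiv ℝ (fun w => (starRingEnd ℂ) (v w k) * v w k) z :=
      fderiv_fun_sum fun k _ => ((hdconj k).mul (hdv k))
    calc ∑ k, ((starRingEnd ℂ) (v z k) * fderiv ℝ (fun w => v w k) z e
          + (starRingEnd ℂ) (fderiv ℝ (fun w => v w k) z e) * v z k)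
        = ∑ k, fderiv ℝ (fun w => (starRingEnd ℂ) (v w k) * v w k) z e := by
          refine Finset.sum_congr rfl fun k _ => ?_
          rw [fderiv_fun_mul (hdconj k) (hdv k)]
          simp [fderiv_conj_apply, mul_comm]
      _ = (∑ k, fderiv ℝ (fun w => (starRingEnd ℂ) (v w k) * v w k) z) e := by
          rw [ContinuousLinearMap.sum_apply]
      _ = 0 := by rw [← hsum, hgz]; rfl
  -- hermiticity facts
  have hLp : ∀ k l, (starRingEnd ℂ) (Lprin z k l) = Lprin z l k := by
    intro k l
    have := (hLpHerm z).apply l k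
    exact this
  have hLs : ∀ k l, (starRingEnd ℂ) (Lsub z.1 k l) = Lsub z.1 l k := by
    intro k l
    have := (hLsHerm z.1).apply l k
    exact this
  -- the three terms
  rw [← Complex.conj_eq_iff_im]
  simp only [phaseFunction, Dx, Dp, fderiv_conj_apply, fderiv_ofReal_apply hdh]
  rw [map_sub, map_sub, _root_.map_mul, _root_.map_mul]
  have hc1 : (starRingEnd ℂ) (∑ k, ∑ l, (starRingEnd ℂ) (v z k) * Lsub z.1 k l * v z l)
      = ∑ k, ∑ l, (starRingEnd ℂ) (v z k) * Lsub z.1 k l * v z l := by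
    simp only [map_sum, _root_.map_mul, Complex.conj_conj, hLs]
    rw [Finset.sum_comm]
    refine Finset.sum_congr rfl fun k _ => Finset.sum_congr rfl fun l _ => ?_
    ring
  have hc2 : (starRingEnd ℂ) (∑ α, ∑ k, ∑ l,
        ((starRingEnd ℂ) (fderiv ℝ (fun w => v w k) z (Pi.single α 1, 0))
            * (Lprin z k l - if k = l then ((h z : ℝ) : ℂ) else 0)
            * fderiv ℝ (fun w => v w l) z (0, Pi.single α 1)
          - (starRingEnd ℂ) (fderiv ℝ (fun w => v w k) z (0, Pi.single α 1))
            * (Lprin z k l - if k = l then ((h z : ℝ) : ℂ) else 0)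
            * fderiv ℝ (fun w => v w l) z (Pi.single α 1, 0)))
      = -(∑ α, ∑ k, ∑ l,
        ((starRingEnd ℂ) (fderiv ℝ (fun w => v w k) z (Pi.single α 1, 0))
            * (Lprin z k l - if k = l then ((h z : ℝ) : ℂ) else 0)
            * fderiv ℝ (fun w => v w l) z (0, Pi.single α 1)
          - (starRingEnd ℂ) (fderiv ℝ (fun w => v w k) z (0, Pi.single α 1))
            * (Lprin z k l - if k = l then ((h z : ℝ) : ℂ) else 0)
            * fderiv ℝ (fun w => v w l) z (Pi.single α 1, 0))) := by
    simp only [map_sum, map_sub, _root_.map_mul, Complex.conj_conj, hLp,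
      apply_ite (starRingEnd ℂ), Complex.conj_ofReal, map_zero]
    rw [← Finset.sum_neg_distrib]
    refine Finset.sum_congr rfl fun α _ => ?_
    rw [Finset.sum_comm, ← Finset.sum_neg_distrib]
    refine Finset.sum_congr rfl fun k _ => ?_
    rw [← Finset.sum_neg_distrib]
    refine Finset.sum_congr rfl fun l _ => ?_
    rcases eq_or_ne k l with hkl | hkl
    · subst hkl; simp; ring
    · simp [hkl, hkl.symm]; ring
  have hc3 : (starRingEnd ℂ) (∑ k, (starRingEnd ℂ) (v z k) *
        (∑ α, (fderiv ℝ (fun w => v w k) z (Pi.single α 1, 0)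
                * ((fderiv ℝ h z (0, Pi.single α 1) : ℝ) : ℂ)
              - fderiv ℝ (fun w => v w k) z (0, Pi.single α 1)
                * ((fderiv ℝ h z (Pi.single α 1, 0) : ℝ) : ℂ))))
      = -(∑ k, (starRingEnd ℂ) (v z k) *
        (∑ α, (fderiv ℝ (fun w => v w k) z (Pi.single α 1, 0)
                * ((fderiv ℝ h z (0, Pi.single α 1) : ℝ) : ℂ)
              - fderiv ℝ (fun w => v w k) z (0, Pi.single α 1)
                * ((fderiv ℝ h z (Pi.single α 1, 0) : ℝ) : ℂ)))) := by
    rw [eq_neg_iff_add_eq_zero]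
    simp only [map_sum, map_sub, _root_.map_mul, Complex.conj_conj, Complex.conj_ofReal,
      Finset.mul_sum]
    rw [← Finset.sum_add_distrib]
    have hterm : ∀ k, ((∑ α, v z k *
            ((starRingEnd ℂ) (fderiv ℝ (fun w => v w k) z (Pi.single α 1, 0))
                * ((fderiv ℝ h z (0, Pi.single α 1) : ℝ) : ℂ)
              - (starRingEnd ℂ) (fderiv ℝ (fun w => v w k) z (0, Pi.single α 1))
                * ((fderiv ℝ h z (Pi.single α 1, 0) : ℝ) : ℂ)))
        + ∑ α, (starRingEnd ℂ) (v z k) *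
            (fderiv ℝ (fun w => v w k) z (Pi.single α 1, 0)
                * ((fderiv ℝ h z (0, Pi.single α 1) : ℝ) : ℂ)
              - fderiv ℝ (fun w => v w k) z (0, Pi.single α 1)
                * ((fderiv ℝ h z (Pi.single α 1, 0) : ℝ) : ℂ))) =
        ∑ α, (((fderiv ℝ h z (0, Pi.single α 1) : ℝ) : ℂ) *
            ((starRingEnd ℂ) (v z k) * fderiv ℝ (fun w => v w k) z (Pi.single α 1, 0)
              + (starRingEnd ℂ) (fderiv ℝ (fun w => v w k) z (Pi.single α 1, 0)) * v z k)
          - ((fderiv ℝ h z (Pi.single α 1, 0) : ℝ) : ℂ) *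
            ((starRingEnd ℂ) (v z k) * fderiv ℝ (fun w => v w k) z (0, Pi.single α 1)
              + (starRingEnd ℂ) (fderiv ℝ (fun w => v w k) z (0, Pi.single α 1)) * v z k)) := by
      intro k
      rw [← Finset.sum_add_distrib]
      refine Finset.sum_congr rfl fun α _ => ?_
      ring
    rw [Finset.sum_congr rfl fun k _ => hterm k, Finset.sum_comm]
    refine Finset.sum_eq_zero fun α _ => ?_
    rw [Finset.sum_sub_distrib, ← Finset.mul_sum, ← Finset.mul_sum,
      key (Pi.single α 1, 0), key (0, Pi.single α 1)]
    ring
  rw [hc1, hc2, hc3]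
  have : (starRingEnd ℂ) (Complex.I / 2) = -(Complex.I / 2) := by
    rw [map_div₀, Complex.conj_I, map_ofNat, neg_div]
  rw [this, Complex.conj_I]
  ring

end
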